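/- Let d ≥ 1, ℏ > 0, λ > 0, K > 0, and let A : ℝ^d → ℝ^d satisfy |A(x)−A(y)| ≤ K|x−y| for all x, y ∈ ℝ^d. Fix (x,ξ) ∈ ℝ^d × ℝ^d. For every smooth compactly supported φ : ℝ^d → ℂ one has the two-sided bound (1/M)·C̃_λ(φ) ≤ C_λ(φ) ≤ M·C̃_λ(φ), where M := max(2, (λ² + 2K²)/λ²). -/

import Mathlib

open MeasureTheory

/-- The non-magnetic cost quadratic form
`C_λ(φ) = ∫ (λ²/2)|x−y|²|φ(y)|² dy + (1/2)∑_k ‖ξ_k φ + iℏ ∂_{y_k}φ‖₂²`. -/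
noncomputable def costNM (d : ℕ) (hbar lam : ℝ)
    (x ξ : EuclideanSpace ℝ (Fin d)) (φ : EuclideanSpace ℝ (Fin d) → ℂ) : ℝ :=
  (∫ y, (lam ^ 2 / 2) * ‖x - y‖ ^ 2 * ‖φ y‖ ^ 2)
    + (1 / 2) * (∑ k : Fin d, ∫ y,
        ‖((ξ k : ℝ) : ℂ) * φ y
          + Complex.I * (hbar : ℂ) * fderiv ℝ φ y (EuclideanSpace.single k 1)‖ ^ 2)

/-- The magnetic cost quadratic form
`C̃_λ(φ) = ∫ (λ²/2)|x−y|²|φ(y)|² dy + (1/2)∑_k ‖(ξ_k + A_k(x) − A_k(·))φ + iℏ ∂_{y_k}φ‖₂²`. -/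
noncomputable def costM (d : ℕ) (hbar lam : ℝ)
    (A : EuclideanSpace ℝ (Fin d) → EuclideanSpace ℝ (Fin d))
    (x ξ : EuclideanSpace ℝ (Fin d)) (φ : EuclideanSpace ℝ (Fin d) → ℂ) : ℝ :=
  (∫ y, (lam ^ 2 / 2) * ‖x - y‖ ^ 2 * ‖φ y‖ ^ 2)
    + (1 / 2) * (∑ k : Fin d, ∫ y,
        ‖((ξ k + A x k - A y k : ℝ) : ℂ) * φ y
          + Complex.I * (hbar : ℂ) * fderiv ℝ φ y (EuclideanSpace.single k 1)‖ ^ 2)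

/-- Integrability of the squared-norm integrands. -/
lemma cost_integrable_aux {d : ℕ} (φ : EuclideanSpace ℝ (Fin d) → ℂ)
    (hφ : Continuous φ) (hφc : HasCompactSupport φ)
    (c : EuclideanSpace ℝ (Fin d) → ℂ) (hc : Continuous c)
    (g : EuclideanSpace ℝ (Fin d) → ℂ) (hg : Continuous g) (hgc : HasCompactSupport g) :
    Integrable (fun y => ‖c y * φ y + g y‖ ^ 2) := by
  apply Continuous.integrable_of_hasCompactSupport
  · exact ((hc.mul hφ).add hg).norm.pow 2
  · have h1 : HasCompactSupport (fun y => c y * φ y + g y) := by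
      apply HasCompactSupport.add
      · exact hφc.mul_left
      · exact hgc
    exact h1.comp_left (g := fun z : ℂ => ‖z‖ ^ 2) (by simp)

/-- Key comparison of the sums of squared norms when the coefficients differ
by something bounded by `K‖x-y‖` in square-sum. -/
lemma cost_sum_le_aux {d : ℕ} (K : ℝ) (x : EuclideanSpace ℝ (Fin d))
    (φ : EuclideanSpace ℝ (Fin d) → ℂ)
    (g : Fin d → EuclideanSpace ℝ (Fin d) → ℂ)
    (α β : Fin d → EuclideanSpace ℝ (Fin d) → ℝ)
    (hαβ : ∀ y, ∑ k : Fin d, (α k y - β k y) ^ 2 ≤ K ^ 2 * ‖x - y‖ ^ 2)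
    (hint1 : ∀ k, Integrable (fun y => ‖((α k y : ℝ) : ℂ) * φ y + g k y‖ ^ 2))
    (hint2 : ∀ k, Integrable (fun y => ‖((β k y : ℝ) : ℂ) * φ y + g k y‖ ^ 2))
    (hintW : Integrable (fun y => ‖x - y‖ ^ 2 * ‖φ y‖ ^ 2)) :
    (∑ k : Fin d, ∫ y, ‖((α k y : ℝ) : ℂ) * φ y + g k y‖ ^ 2)
      ≤ 2 * (∑ k : Fin d, ∫ y, ‖((β k y : ℝ) : ℂ) * φ y + g k y‖ ^ 2)
        + 2 * K ^ 2 * ∫ y, ‖x - y‖ ^ 2 * ‖φ y‖ ^ 2 := by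
  have hGint : Integrable (fun y => ∑ k : Fin d, ‖((β k y : ℝ) : ℂ) * φ y + g k y‖ ^ 2) :=
    integrable_finset_sum _ (fun k _ => hint2 k)
  have hFint : Integrable (fun y => ∑ k : Fin d, ‖((α k y : ℝ) : ℂ) * φ y + g k y‖ ^ 2) :=
    integrable_finset_sum _ (fun k _ => hint1 k)
  have hmono : ∀ y, (∑ k : Fin d, ‖((α k y : ℝ) : ℂ) * φ y + g k y‖ ^ 2)
      ≤ 2 * (∑ k : Fin d, ‖((β k y : ℝ) : ℂ) * φ y + g k y‖ ^ 2)
        + 2 * K ^ 2 * (‖x - y‖ ^ 2 * ‖φ y‖ ^ 2) := by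
    intro y
    have h1 : ∀ k : Fin d, ‖((α k y : ℝ) : ℂ) * φ y + g k y‖ ^ 2
        ≤ 2 * ‖((β k y : ℝ) : ℂ) * φ y + g k y‖ ^ 2
          + 2 * ((α k y - β k y) ^ 2 * ‖φ y‖ ^ 2) := by
      intro k
      have heq : ((α k y : ℝ) : ℂ) * φ y + g k y
          = (((β k y : ℝ) : ℂ) * φ y + g k y) + ((α k y - β k y : ℝ) : ℂ) * φ y := by
        push_cast; ring
      rw [heq]
      set P : ℂ := ((β k y : ℝ) : ℂ) * φ y + g k y
      set Q : ℂ := ((α k y - β k y : ℝ) : ℂ) * φ y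
      have hn := norm_add_le P Q
      have hm : ‖Q‖ = |α k y - β k y| * ‖φ y‖ := by
        rw [norm_mul, Complex.norm_real, Real.norm_eq_abs]
      have hq2 : ‖Q‖ ^ 2 = (α k y - β k y) ^ 2 * ‖φ y‖ ^ 2 := by
        rw [hm, mul_pow, sq_abs]
      nlinarith [norm_nonneg P, norm_nonneg Q, norm_nonneg (P + Q), sq_nonneg (‖P‖ - ‖Q‖)]
    calc (∑ k : Fin d, ‖((α k y : ℝ) : ℂ) * φ y + g k y‖ ^ 2)
        ≤ ∑ k : Fin d, (2 * ‖((β k y : ℝ) : ℂ) * φ y + g k y‖ ^ 2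
            + 2 * ((α k y - β k y) ^ 2 * ‖φ y‖ ^ 2)) :=
          Finset.sum_le_sum (fun k _ => h1 k)
      _ = 2 * (∑ k : Fin d, ‖((β k y : ℝ) : ℂ) * φ y + g k y‖ ^ 2)
            + 2 * ((∑ k : Fin d, (α k y - β k y) ^ 2) * ‖φ y‖ ^ 2) := by
          rw [Finset.sum_add_distrib, ← Finset.mul_sum, ← Finset.mul_sum, ← Finset.sum_mul]
      _ ≤ 2 * (∑ k : Fin d, ‖((β k y : ℝ) : ℂ) * φ y + g k y‖ ^ 2)
            + 2 * K ^ 2 * (‖x - y‖ ^ 2 * ‖φ y‖ ^ 2) := by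
          nlinarith [hαβ y, sq_nonneg (‖φ y‖)]
  calc (∑ k : Fin d, ∫ y, ‖((α k y : ℝ) : ℂ) * φ y + g k y‖ ^ 2)
      = ∫ y, ∑ k : Fin d, ‖((α k y : ℝ) : ℂ) * φ y + g k y‖ ^ 2 :=
        (integral_finset_sum _ (fun k _ => hint1 k)).symm
    _ ≤ ∫ y, (2 * (∑ k : Fin d, ‖((β k y : ℝ) : ℂ) * φ y + g k y‖ ^ 2)
          + 2 * K ^ 2 * (‖x - y‖ ^ 2 * ‖φ y‖ ^ 2)) :=
        integral_mono hFint ((hGint.const_mul 2).add (hintW.const_mul (2 * K ^ 2))) hmono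
    _ = 2 * (∑ k : Fin d, ∫ y, ‖((β k y : ℝ) : ℂ) * φ y + g k y‖ ^ 2)
          + 2 * K ^ 2 * ∫ y, ‖x - y‖ ^ 2 * ‖φ y‖ ^ 2 := by
        rw [integral_add (hGint.const_mul 2) (hintW.const_mul (2 * K ^ 2)),
          integral_const_mul, integral_const_mul,
          integral_finset_sum _ (fun k _ => hint2 k)]

/-- **Equivalence of the magnetic and non-magnetic cost quadratic forms.**
If `A` is Lipschitz with constant `K`, then with `M = max(2, (λ² + 2K²)/λ²)` one has
`(1/M)·C̃_λ(φ) ≤ C_λ(φ) ≤ M·C̃_λ(φ)` for all smooth compactly supported `φ`. -/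
theorem cost_equivalence
    (d : ℕ) (hd : 1 ≤ d) (hbar lam K : ℝ) (hbar_pos : 0 < hbar)
    (hlam : 0 < lam) (hKpos : 0 < K)
    (A : EuclideanSpace ℝ (Fin d) → EuclideanSpace ℝ (Fin d))
    (hA : ∀ x y, ‖A x - A y‖ ≤ K * ‖x - y‖)
    (x ξ : EuclideanSpace ℝ (Fin d))
    (φ : EuclideanSpace ℝ (Fin d) → ℂ)
    (hφ : ContDiff ℝ (⊤ : ℕ∞) φ) (hφc : HasCompactSupport φ) :
    (1 / max 2 ((lam ^ 2 + 2 * K ^ 2) / lam ^ 2)) * costM d hbar lam A x ξ φ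
        ≤ costNM d hbar lam x ξ φ
      ∧ costNM d hbar lam x ξ φ
        ≤ max 2 ((lam ^ 2 + 2 * K ^ 2) / lam ^ 2) * costM d hbar lam A x ξ φ := by
  classical
  set M : ℝ := max 2 ((lam ^ 2 + 2 * K ^ 2) / lam ^ 2) with hMdef
  have hM2 : (2 : ℝ) ≤ M := le_max_left _ _
  have hMK : (lam ^ 2 + 2 * K ^ 2) / lam ^ 2 ≤ M := le_max_right _ _
  have hlam2 : (0 : ℝ) < lam ^ 2 := by positivity
  have hMpos : (0 : ℝ) < M := lt_of_lt_of_le two_pos hM2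
  have hMlam : lam ^ 2 + 2 * K ^ 2 ≤ M * lam ^ 2 := by
    rw [div_le_iff₀ hlam2] at hMK; exact hMK
  -- continuity of A
  have hAcont : Continuous A := by
    have : LipschitzWith (Real.toNNReal K) A := by
      apply LipschitzWith.of_dist_le_mul
      intro p q
      rw [dist_eq_norm, dist_eq_norm, Real.coe_toNNReal _ hKpos.le]
      exact hA p q
    exact this.continuous
  have hAk : ∀ k : Fin d, Continuous (fun y : EuclideanSpace ℝ (Fin d) => A y k) :=
    fun k => (continuous_apply k).comp ((PiLp.continuous_ofLp 2 _).comp hAcont)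
  -- the derivative terms
  have hDc : ∀ k : Fin d,
      Continuous (fun y => fderiv ℝ φ y (EuclideanSpace.single k 1)) :=
    fun k => (hφ.continuous_fderiv (by simp)).clm_apply continuous_const
  have hDsupp : ∀ k : Fin d,
      HasCompactSupport (fun y => fderiv ℝ φ y (EuclideanSpace.single k 1)) := by
    intro k
    exact (hφc.fderiv ℝ).comp_left
      (g := fun L : EuclideanSpace ℝ (Fin d) →L[ℝ] ℂ => L (EuclideanSpace.single k 1)) (by simp)
  have hgc : ∀ k : Fin d, Continuous
      (fun y => Complex.I * (hbar : ℂ) * fderiv ℝ φ y (EuclideanSpace.single k 1)) :=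
    fun k => continuous_const.mul (hDc k)
  have hgsupp : ∀ k : Fin d, HasCompactSupport
      (fun y => Complex.I * (hbar : ℂ) * fderiv ℝ φ y (EuclideanSpace.single k 1)) :=
    fun k => (hDsupp k).mul_left
  -- integrability
  have hintW : Integrable (fun y : EuclideanSpace ℝ (Fin d) => ‖x - y‖ ^ 2 * ‖φ y‖ ^ 2) := by
    apply Continuous.integrable_of_hasCompactSupport
    · exact (((continuous_const.sub continuous_id).norm.pow 2).mul (hφ.continuous.norm.pow 2))
    · apply hφc.mono
      intro y hy
      simp only [Function.mem_support] at hy ⊢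
      intro h0; apply hy; simp [h0]
  have hint1 : ∀ k : Fin d, Integrable (fun y =>
      ‖((ξ k : ℝ) : ℂ) * φ y
        + Complex.I * (hbar : ℂ) * fderiv ℝ φ y (EuclideanSpace.single k 1)‖ ^ 2) :=
    fun k => cost_integrable_aux φ hφ.continuous hφc _ continuous_const _ (hgc k) (hgsupp k)
  have hint2 : ∀ k : Fin d, Integrable (fun y =>
      ‖((ξ k + A x k - A y k : ℝ) : ℂ) * φ y
        + Complex.I * (hbar : ℂ) * fderiv ℝ φ y (EuclideanSpace.single k 1)‖ ^ 2) :=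
    fun k => cost_integrable_aux φ hφ.continuous hφc _
      (Complex.continuous_ofReal.comp ((continuous_const.sub (hAk k))))
      _ (hgc k) (hgsupp k)
  -- the Lipschitz bound on sums of squares
  have hE : ∀ y, ∑ k : Fin d, (A x k - A y k) ^ 2 ≤ K ^ 2 * ‖x - y‖ ^ 2 := by
    intro y
    have h1 : ∑ k : Fin d, (A x k - A y k) ^ 2 = ‖A x - A y‖ ^ 2 := by
      rw [EuclideanSpace.norm_eq, Real.sq_sqrt (Finset.sum_nonneg fun k _ => by positivity)]
      exact Finset.sum_congr rfl fun k _ => by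
        simp [PiLp.sub_apply, Real.norm_eq_abs, sq_abs]
    rw [h1]
    have h2 := hA x y
    nlinarith [norm_nonneg (A x - A y), norm_nonneg (x - y), hKpos.le]
  -- the two comparison inequalities between the sums
  have hSA : (∑ k : Fin d, ∫ y, ‖((ξ k : ℝ) : ℂ) * φ y
        + Complex.I * (hbar : ℂ) * fderiv ℝ φ y (EuclideanSpace.single k 1)‖ ^ 2)
      ≤ 2 * (∑ k : Fin d, ∫ y, ‖((ξ k + A x k - A y k : ℝ) : ℂ) * φ y
          + Complex.I * (hbar : ℂ) * fderiv ℝ φ y (EuclideanSpace.single k 1)‖ ^ 2)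
        + 2 * K ^ 2 * ∫ y, ‖x - y‖ ^ 2 * ‖φ y‖ ^ 2 := by
    refine cost_sum_le_aux K x φ _ (fun k _ => ξ k) (fun k y => ξ k + A x k - A y k)
      ?_ hint1 hint2 hintW
    intro y
    refine le_trans (le_of_eq ?_) (hE y)
    exact Finset.sum_congr rfl fun k _ => by ring
  have hSB : (∑ k : Fin d, ∫ y, ‖((ξ k + A x k - A y k : ℝ) : ℂ) * φ y
        + Complex.I * (hbar : ℂ) * fderiv ℝ φ y (EuclideanSpace.single k 1)‖ ^ 2)
      ≤ 2 * (∑ k : Fin d, ∫ y, ‖((ξ k : ℝ) : ℂ) * φ y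
          + Complex.I * (hbar : ℂ) * fderiv ℝ φ y (EuclideanSpace.single k 1)‖ ^ 2)
        + 2 * K ^ 2 * ∫ y, ‖x - y‖ ^ 2 * ‖φ y‖ ^ 2 := by
    refine cost_sum_le_aux K x φ _ (fun k y => ξ k + A x k - A y k) (fun k _ => ξ k)
      ?_ hint2 hint1 hintW
    intro y
    refine le_trans (le_of_eq ?_) (hE y)
    exact Finset.sum_congr rfl fun k _ => by ring
  -- nonnegativity
  have hW0 : 0 ≤ ∫ y, ‖x - y‖ ^ 2 * ‖φ y‖ ^ 2 :=
    integral_nonneg fun y => by positivity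
  have hSA0 : 0 ≤ ∑ k : Fin d, ∫ y, ‖((ξ k : ℝ) : ℂ) * φ y
      + Complex.I * (hbar : ℂ) * fderiv ℝ φ y (EuclideanSpace.single k 1)‖ ^ 2 :=
    Finset.sum_nonneg fun k _ => integral_nonneg fun y => by positivity
  have hSB0 : 0 ≤ ∑ k : Fin d, ∫ y, ‖((ξ k + A x k - A y k : ℝ) : ℂ) * φ y
      + Complex.I * (hbar : ℂ) * fderiv ℝ φ y (EuclideanSpace.single k 1)‖ ^ 2 :=
    Finset.sum_nonneg fun k _ => integral_nonneg fun y => by positivity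
  -- compute the potential term
  have hV : (∫ y, (lam ^ 2 / 2) * ‖x - y‖ ^ 2 * ‖φ y‖ ^ 2)
      = (lam ^ 2 / 2) * ∫ y, ‖x - y‖ ^ 2 * ‖φ y‖ ^ 2 := by
    simp_rw [mul_assoc]
    exact integral_const_mul _ _
  unfold costNM costM
  rw [hV]
  set W := ∫ y, ‖x - y‖ ^ 2 * ‖φ y‖ ^ 2
  set SA := ∑ k : Fin d, ∫ y, ‖((ξ k : ℝ) : ℂ) * φ y
      + Complex.I * (hbar : ℂ) * fderiv ℝ φ y (EuclideanSpace.single k 1)‖ ^ 2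
  set SB := ∑ k : Fin d, ∫ y, ‖((ξ k + A x k - A y k : ℝ) : ℂ) * φ y
      + Complex.I * (hbar : ℂ) * fderiv ℝ φ y (EuclideanSpace.single k 1)‖ ^ 2
  constructor
  · rw [div_mul_eq_mul_div, div_le_iff₀ hMpos]
    nlinarith [mul_nonneg (sub_nonneg.2 hMlam) hW0, mul_nonneg (sub_nonneg.2 hM2) hSA0]
  · nlinarith [mul_nonneg (sub_nonneg.2 hMlam) hW0, mul_nonneg (sub_nonneg.2 hM2) hSB0]
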